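/- arXiv:2307.09868 — 5 statements merged into one kernel-verified Lean document; each statement's English description precedes it below -/
import Mathlib

section
/- Let G be a finite group, π a set of primes, and N a normal π-subgroup of G. Then the set of π-elements of G/N is exactly the image of the set of π-elements of G under the quotient map, and the number of π-elements of G/N equals |G_π|/|N|, where G_π denotes the set of π-elements of G. -/
/-!
If `g ^ k ∈ N` with `k` the order of `gN`, then `orderOf g ∣ k * orderOf (g ^ k)`, so every prime
dividing `orderOf g` divides the order of `gN` or the order of an element of the `π`-group `N`.
Hence `gN` is a `π`-element exactly when `g` is, i.e. `G_π` is the full preimage of `(G/N)_π`,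
which is therefore its image, and a full preimage has `|N|` times as many elements.
-/

def IsPiElement {M : Type*} [Monoid M] (π : Set ℕ) (x : M) : Prop :=
  ∀ q : ℕ, q.Prime → q ∣ orderOf x → q ∈ π

theorem orderOf_dvd_mul_orderOf_pow {M : Type*} [Monoid M] (x : M) (k : ℕ) :
    orderOf x ∣ k * orderOf (x ^ k) :=
  orderOf_dvd_of_pow_eq_one (by rw [pow_mul, pow_orderOf_eq_one])

namespace IsPiElement

variable {M M' : Type*} [Monoid M] [Monoid M'] {π : Set ℕ} {x : M}

theorem of_orderOf_dvd {y : M'} (hx : IsPiElement π x) (h : orderOf y ∣ orderOf x) :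
    IsPiElement π y :=
  fun q hq hqy => hx q hq (hqy.trans h)

theorem map (hx : IsPiElement π x) (f : M →* M') :
    IsPiElement π (f x) :=
  hx.of_orderOf_dvd (orderOf_map_dvd f x)

theorem of_pow {k : ℕ} (hk : ∀ q : ℕ, q.Prime → q ∣ k → q ∈ π) (hxk : IsPiElement π (x ^ k)) :
    IsPiElement π x := fun q hq hqx =>
  (hq.dvd_mul.mp (hqx.trans (orderOf_dvd_mul_orderOf_pow x k))).elim (hk q hq) (hxk q hq)

end IsPiElement

section Quotient

variable {G : Type*} [Group G] {π : Set ℕ} {N : Subgroup G} [N.Normal]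

theorem isPiElement_mk_iff (hN : ∀ n ∈ N, IsPiElement π n) {g : G} :
    IsPiElement π (g : G ⧸ N) ↔ IsPiElement π g := by
  refine ⟨fun h => IsPiElement.of_pow h (hN _ ?_), fun h => h.map (QuotientGroup.mk' N)⟩
  rw [← QuotientGroup.eq_one_iff, QuotientGroup.mk_pow, pow_orderOf_eq_one]

theorem preimage_mk_setOf_isPiElement (hN : ∀ n ∈ N, IsPiElement π n) :
    (QuotientGroup.mk : G → G ⧸ N) ⁻¹' {g | IsPiElement π g} = {g | IsPiElement π g} :=
  Set.ext fun _ => isPiElement_mk_iff hN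

theorem image_mk_setOf_isPiElement (hN : ∀ n ∈ N, IsPiElement π n) :
    (QuotientGroup.mk : G → G ⧸ N) '' {g | IsPiElement π g} = {g | IsPiElement π g} := by
  rw [← preimage_mk_setOf_isPiElement hN, Set.image_preimage_eq _ QuotientGroup.mk_surjective]

theorem card_setOf_isPiElement_quotient [Finite G] (hN : ∀ n ∈ N, IsPiElement π n) :
    Nat.card {g : G ⧸ N | IsPiElement π g} = Nat.card {g : G | IsPiElement π g} / Nat.card N := by
  rw [← preimage_mk_setOf_isPiElement hN, QuotientGroup.card_preimage_mk,
    Nat.mul_div_cancel_left _ Nat.card_pos]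

end Quotient

theorem piElements_quotient_general {G : Type*} [Group G] [Finite G] (π : Set ℕ)
    (N : Subgroup G) [N.Normal]
    (hN : ∀ n ∈ N, ∀ q : ℕ, q.Prime → q ∣ orderOf n → q ∈ π) :
    ((QuotientGroup.mk : G → G ⧸ N) ''
        {g : G | ∀ q : ℕ, q.Prime → q ∣ orderOf g → q ∈ π}
      = {g : G ⧸ N | ∀ q : ℕ, q.Prime → q ∣ orderOf g → q ∈ π}) ∧
    Nat.card {g : G ⧸ N | ∀ q : ℕ, q.Prime → q ∣ orderOf g → q ∈ π}
      = Nat.card {g : G | ∀ q : ℕ, q.Prime → q ∣ orderOf g → q ∈ π} / Nat.card N :=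
  ⟨image_mk_setOf_isPiElement hN, card_setOf_isPiElement_quotient hN⟩

/-- For a finite group `G`, a set of primes `π` and a normal `π`-subgroup `N`,
the `π`-elements of `G/N` are exactly the images of the `π`-elements of `G`,
and their number is `|G_π| / |N|`. -/
theorem piElements_quotient {G : Type*} [Group G] [Finite G] (π : Set ℕ)
    (hπ : ∀ q ∈ π, Nat.Prime q) (N : Subgroup G) [N.Normal]
    (hN : ∀ n ∈ N, ∀ q : ℕ, q.Prime → q ∣ orderOf n → q ∈ π) :
    ((QuotientGroup.mk : G → G ⧸ N) ''
        {g : G | ∀ q : ℕ, q.Prime → q ∣ orderOf g → q ∈ π}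
      = {g : G ⧸ N | ∀ q : ℕ, q.Prime → q ∣ orderOf g → q ∈ π}) ∧
    Nat.card {g : G ⧸ N | ∀ q : ℕ, q.Prime → q ∣ orderOf g → q ∈ π}
      = Nat.card {g : G | ∀ q : ℕ, q.Prime → q ∣ orderOf g → q ∈ π} / Nat.card N :=
  piElements_quotient_general π N hN
end

section
/- Let G be a finite group, x, y ∈ G, and K ≤ G a subgroup normalized by both x and y, such that Kx = Ky (as cosets) and gcd(|K|, o(x)) = 1 = gcd(|K|, o(y)), where o denotes element order. Then x = y^k for some k ∈ K. -/
/-!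
Induction on `|G|`. Let `n = o(x) > 1`, `p` a prime divisor of `n` and `a = x ^ (n / p)`.
In `⟨a⟩K` the subgroup `⟨a⟩` has index `|K|`, so it is a Sylow `p`-subgroup, and Sylow's
theorem conjugates `y ^ (n / p)` by an element of `K` onto `a`. After this replacement both
`x` and `y` centralize `a`, so the statement in the smaller group `N(⟨a⟩) / ⟨a⟩` applies, and
it lifts back to `G` because `⟨a⟩ ∩ K = 1`.
-/

open Subgroup

def CoprimeCosetConjugacy (G : Type*) [Group G] : Prop :=
  ∀ (K : Subgroup G) (x y : G), x ∈ normalizer (K : Set G) → y * x⁻¹ ∈ K →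
    Nat.Coprime (Nat.card K) (orderOf x) → Nat.Coprime (Nat.card K) (orderOf y) →
    ∃ k ∈ K, k * y * k⁻¹ = x

section

variable {G : Type*} [Group G]

namespace Subgroup

theorem eq_one_of_mem_of_coprime {K : Subgroup G} {w : G} (hw : w ∈ K)
    (h : Nat.Coprime (Nat.card K) (orderOf w)) : w = 1 :=
  orderOf_eq_one_iff.mp (Nat.eq_one_of_dvd_coprimes h (K.orderOf_dvd_natCard hw) dvd_rfl)

theorem disjoint_zpowers_of_coprime {K : Subgroup G} {a : G}
    (h : Nat.Coprime (Nat.card K) (orderOf a)) : Disjoint K (zpowers a) :=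
  disjoint_of_coprime_natCard (by rwa [Nat.card_zpowers])

theorem mem_normalizer_zpowers_of_commute {x z : G} (h : Commute x z) :
    x ∈ normalizer (zpowers z : Set G) := by
  refine centralizer_le_normalizer _ (mem_centralizer_iff.mpr fun g hg => ?_)
  obtain ⟨j, rfl⟩ := mem_zpowers_iff.mp hg
  exact (h.zpow_right j).eq.symm

theorem relIndex_sup_right_of_le_normalizer {H K : Subgroup G}
    (hH : H ≤ normalizer (K : Set G)) : K.relIndex (H ⊔ K) = K.relIndex H := by
  have := normal_subgroupOf_sup_of_le_normalizer hH
  have h := relIndex_sup_right (H.subgroupOf (H ⊔ K)) (K.subgroupOf (H ⊔ K))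
  rw [← subgroupOf_sup le_sup_left le_sup_right, subgroupOf_self, relIndex_top_right,
    relIndex_subgroupOf le_sup_left] at h
  exact h

theorem relIndex_sup_eq_card_of_disjoint [Finite G] {H K : Subgroup G}
    (hH : H ≤ normalizer (K : Set G)) (hd : Disjoint H K) :
    H.relIndex (H ⊔ K) = Nat.card K := by
  have hM := relIndex_mul_relIndex ⊥ H (H ⊔ K) bot_le le_sup_left
  have hM' := relIndex_mul_relIndex ⊥ K (H ⊔ K) bot_le le_sup_right
  rw [relIndex_sup_right_of_le_normalizer hH, ← inf_relIndex_right K H, hd.symm.eq_bot] at hM'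
  simp only [relIndex_bot_left] at hM hM'
  exact Nat.eq_of_mul_eq_mul_left Nat.card_pos (by rw [hM, ← hM', mul_comm])

theorem card_quotient_normalizer_lt [Finite G] {L : Subgroup G} (hL : L ≠ ⊥) :
    Nat.card (normalizer (L : Set G) ⧸ L.subgroupOf (normalizer (L : Set G))) < Nat.card G := by
  have hC := card_eq_card_quotient_mul_card_subgroup (L.subgroupOf (normalizer (L : Set G)))
  rw [Nat.card_congr (subgroupOfEquivOfLe le_normalizer).toEquiv] at hC
  calc _ < Nat.card (normalizer (L : Set G)) := by
        rw [hC]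
        exact lt_mul_of_one_lt_right Nat.card_pos ((one_lt_card_iff_ne_bot L).mpr hL)
    _ ≤ Nat.card G := card_le_card_group _

section Normalizer

variable {K : Subgroup G} {x y : G}

theorem conj_mul_inv_mem (hx : x ∈ normalizer (K : Set G)) {k : G} (hk : k ∈ K)
    (hyx : y * x⁻¹ ∈ K) : k * y * k⁻¹ * x⁻¹ ∈ K := by
  have hxk : x * k⁻¹ * x⁻¹ ∈ K := (mem_normalizer_iff.mp hx _).mp (inv_mem hk)
  rw [show k * y * k⁻¹ * x⁻¹ = k * (y * x⁻¹) * (x * k⁻¹ * x⁻¹) by group]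
  exact mul_mem (mul_mem hk hyx) hxk

theorem pow_mul_inv_pow_mem (hx : x ∈ normalizer (K : Set G)) (hyx : y * x⁻¹ ∈ K) (n : ℕ) :
    y ^ n * (x ^ n)⁻¹ ∈ K := by
  induction n with
  | zero => simp
  | succ n ih =>
    have h : x ^ n * (y * x⁻¹) * (x ^ n)⁻¹ ∈ K :=
      (mem_normalizer_iff.mp (pow_mem hx n) _).mp hyx
    rw [show y ^ (n + 1) * (x ^ (n + 1))⁻¹
        = y ^ n * (x ^ n)⁻¹ * (x ^ n * (y * x⁻¹) * (x ^ n)⁻¹) by group]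
    exact mul_mem ih h

theorem orderOf_dvd_of_mul_inv_mem (hx : x ∈ normalizer (K : Set G)) (hyx : y * x⁻¹ ∈ K)
    (hoy : Nat.Coprime (Nat.card K) (orderOf y)) : orderOf y ∣ orderOf x := by
  refine orderOf_dvd_of_pow_eq_one (eq_one_of_mem_of_coprime (K := K) ?_ ?_)
  · simpa [pow_orderOf_eq_one] using pow_mul_inv_pow_mem hx hyx (orderOf x)
  · exact hoy.coprime_dvd_right (orderOf_pow_dvd _)

end Normalizer

end Subgroup

section Sylow

variable [Finite G] {p : ℕ} [hp : Fact p.Prime] {K : Subgroup G} {a b : G}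

theorem exists_conj_mem_zpowers (ha : a ∈ normalizer (K : Set G)) (hba : b * a⁻¹ ∈ K)
    (hKp : Nat.Coprime (Nat.card K) p) (hoa : orderOf a = p) (hb : b ^ p = 1) :
    ∃ k ∈ K, k * b * k⁻¹ ∈ zpowers a := by
  set M := zpowers a ⊔ K
  have hPK : zpowers a ≤ normalizer (K : Set G) := zpowers_le.mpr ha
  have hbM : b ∈ M := by
    simpa using mul_mem (le_sup_right (a := zpowers a) hba) (le_sup_left (b := K) (mem_zpowers a))
  have hSylow : IsPGroup p ((zpowers a).subgroupOf M) :=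
    (IsPGroup.of_card (n := 1) (by rw [Nat.card_zpowers, hoa, pow_one])).comap_subtype
  have hidx : ¬ p ∣ ((zpowers a).subgroupOf M).index := by
    rw [← relIndex, relIndex_sup_eq_card_of_disjoint hPK
      (disjoint_zpowers_of_coprime (hoa ▸ hKp)).symm]
    exact (Nat.Prime.coprime_iff_not_dvd hp.out).mp hKp.symm
  obtain ⟨i, -, hi⟩ := (Nat.dvd_prime_pow hp.out).mp
    (orderOf_dvd_of_pow_eq_one (by rwa [pow_one]) : orderOf b ∣ p ^ 1)
  have hQ : IsPGroup p ((zpowers b).subgroupOf M) :=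
    (IsPGroup.of_card (n := i) (by rw [Nat.card_zpowers, hi])).comap_subtype
  obtain ⟨T, hT⟩ := hQ.exists_le_sylow
  obtain ⟨g, hg⟩ := MulAction.exists_smul_eq M T (hSylow.toSylow hidx)
  have hgb : (g : G) * b * (g : G)⁻¹ ∈ zpowers a := by
    have h := smul_mem_pointwise_smul _ (MulAut.conj g) _ (hT (mem_subgroupOf.mpr
      (mem_zpowers b) : (⟨b, hbM⟩ : M) ∈ (zpowers b).subgroupOf M))
    rw [← Sylow.coe_subgroup_smul, hg] at h
    simpa using mem_subgroupOf.mp h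
  obtain ⟨t, ht, k, hk, htk⟩ := Set.mem_mul.mp
    ((coe_mul_of_left_le_normalizer_right _ _ hPK).le g.2)
  refine ⟨k, hk, ?_⟩
  rw [show k * b * k⁻¹ = t⁻¹ * (t * k * b * (t * k)⁻¹) * t by group, htk]
  exact mul_mem (mul_mem (inv_mem ht) hgb) ht

theorem exists_conj_eq_of_orderOf_eq_prime (ha : a ∈ normalizer (K : Set G))
    (hba : b * a⁻¹ ∈ K) (hKp : Nat.Coprime (Nat.card K) p) (hoa : orderOf a = p)
    (hb : b ^ p = 1) : ∃ k ∈ K, k * b * k⁻¹ = a := by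
  obtain ⟨k, hk, hkb⟩ := exists_conj_mem_zpowers ha hba hKp hoa hb
  exact ⟨k, hk, mul_inv_eq_one.mp (disjoint_def.mp (disjoint_zpowers_of_coprime (hoa ▸ hKp))
    (conj_mul_inv_mem ha hk hba) (mul_mem hkb (inv_mem (mem_zpowers a))))⟩

end Sylow

namespace CoprimeCosetConjugacy

variable {H : Type*} [Group H]

theorem exists_conj_eq_of_disjoint_ker (hH : CoprimeCosetConjugacy H) (f : G →* H)
    {K : Subgroup G} {x y : G} (hKf : Disjoint K f.ker) (hx : x ∈ normalizer (K : Set G))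
    (hyx : y * x⁻¹ ∈ K) (hox : Nat.Coprime (Nat.card K) (orderOf x))
    (hoy : Nat.Coprime (Nat.card K) (orderOf y)) : ∃ k ∈ K, k * y * k⁻¹ = x := by
  obtain ⟨_, ⟨k, hk, rfl⟩, hkyx⟩ := hH (K.map f) (f x) (f y)
    (le_normalizer_map f (mem_map_of_mem f hx)) (by simpa using mem_map_of_mem f hyx)
    ((hox.coprime_dvd_right (orderOf_map_dvd f x)).coprime_dvd_left (card_map_dvd K f))
    ((hoy.coprime_dvd_right (orderOf_map_dvd f y)).coprime_dvd_left (card_map_dvd K f))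
  refine ⟨k, hk, mul_inv_eq_one.mp (disjoint_def.mp hKf (conj_mul_inv_mem hx hk hyx) ?_)⟩
  simp [MonoidHom.mem_ker, hkyx]

theorem exists_conj_eq_of_quotient_normalizer {L K : Subgroup G}
    (hQ : CoprimeCosetConjugacy (normalizer (L : Set G) ⧸ L.subgroupOf (normalizer (L : Set G))))
    {x y : G} (hKL : Disjoint K L) (hxL : x ∈ normalizer (L : Set G))
    (hyL : y ∈ normalizer (L : Set G)) (hx : x ∈ normalizer (K : Set G)) (hyx : y * x⁻¹ ∈ K)
    (hox : Nat.Coprime (Nat.card K) (orderOf x)) (hoy : Nat.Coprime (Nat.card K) (orderOf y)) :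
    ∃ k ∈ K, k * y * k⁻¹ = x := by
  set C := normalizer (L : Set G)
  have hKC : Nat.card (K.subgroupOf C) ∣ Nat.card K :=
    card_comap_dvd_of_injective K C.subtype Subtype.coe_injective
  obtain ⟨k, hk, hkyx⟩ := hQ.exists_conj_eq_of_disjoint_ker (QuotientGroup.mk' _)
    (K := K.subgroupOf C) (x := ⟨x, hxL⟩) (y := ⟨y, hyL⟩)
    (by
      rw [QuotientGroup.ker_mk', disjoint_def]
      exact fun hk hl => Subtype.ext (disjoint_def.mp hKL hk hl))
    (le_normalizer_comap C.subtype hx) (mem_subgroupOf.mpr hyx)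
    (by rw [orderOf_mk]; exact hox.coprime_dvd_left hKC)
    (by rw [orderOf_mk]; exact hoy.coprime_dvd_left hKC)
  exact ⟨k, hk, congrArg Subtype.val hkyx⟩

end CoprimeCosetConjugacy

end

theorem coprimeCosetConjugacy_of_finite (G : Type*) [Group G] [Finite G] :
    CoprimeCosetConjugacy G := by
  induction hG : Nat.card G using Nat.strong_induction_on generalizing G with
  | _ N IH =>
  intro K x y hx hyx hox hoy
  rcases eq_or_ne x 1 with rfl | hx1
  · have hy : y = 1 := eq_one_of_mem_of_coprime (by simpa using hyx) hoy
    exact ⟨1, K.one_mem, by simp [hy]⟩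
  set n := orderOf x
  set p := n.minFac
  have hp : Fact p.Prime := ⟨Nat.minFac_prime (orderOf_eq_one_iff.not.mpr hx1)⟩
  have hpn : p ∣ n := Nat.minFac_dvd n
  have hoa : orderOf (x ^ (n / p)) = p := orderOf_pow_orderOf_div (orderOf_pos x).ne' hpn
  obtain ⟨k, hk, hka⟩ := exists_conj_eq_of_orderOf_eq_prime (pow_mem hx _)
    (pow_mul_inv_pow_mem hx hyx _) (hox.coprime_dvd_right hpn) hoa (by
      rw [← pow_mul, Nat.div_mul_cancel hpn]
      exact orderOf_dvd_iff_pow_eq_one.mp (orderOf_dvd_of_mul_inv_mem hx hyx hoy))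
  have hy'a : (k * y * k⁻¹) ^ (n / p) = x ^ (n / p) := by rw [conj_pow, hka]
  have hL : zpowers (x ^ (n / p)) ≠ ⊥ := by
    rw [Ne, zpowers_eq_bot, ← orderOf_eq_one_iff, hoa]
    exact hp.out.ne_one
  obtain ⟨c, hc, hcy⟩ := (IH _ (hG ▸ card_quotient_normalizer_lt hL) _ rfl
    ).exists_conj_eq_of_quotient_normalizer
    (disjoint_zpowers_of_coprime (by rw [hoa]; exact hox.coprime_dvd_right hpn))
    (mem_normalizer_zpowers_of_commute (Commute.self_pow x _))
    (hy'a ▸ mem_normalizer_zpowers_of_commute (Commute.self_pow _ _)) hx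
    (conj_mul_inv_mem hx hk hyx) hox ((SemiconjBy.conj_mk k y).orderOf_eq ▸ hoy)
  exact ⟨c * k, mul_mem hc hk, by rw [← hcy]; group⟩

theorem coset_coprime_conjugate_general {G : Type*} [Group G] [Finite G] (K : Subgroup G) (x y : G)
    (hx : ∀ k ∈ K, x * k * x⁻¹ ∈ K)
    (hcoset : (fun k => k * x) '' (K : Set G) = (fun k => k * y) '' (K : Set G))
    (hox : Nat.Coprime (Nat.card K) (orderOf x))
    (hoy : Nat.Coprime (Nat.card K) (orderOf y)) :
    ∃ k ∈ K, x = k⁻¹ * y * k := by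
  have hyx : y * x⁻¹ ∈ K := by
    obtain ⟨k, hk, hky⟩ : y ∈ (fun k => k * x) '' (K : Set G) :=
      hcoset ▸ ⟨1, K.one_mem, one_mul y⟩
    rwa [← hky, mul_inv_cancel_right]
  obtain ⟨k, hk, hkyx⟩ := coprimeCosetConjugacy_of_finite G K x y
    (mem_normalizer_fintype hx) hyx hox hoy
  exact ⟨k⁻¹, inv_mem hk, by rw [← hkyx]; group⟩

/-- If `x, y` normalize `K ≤ G`, the cosets `Kx` and `Ky` coincide, and the
orders of `x` and `y` are coprime to `|K|`, then `x = y^k` for some `k ∈ K`. -/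
theorem coset_coprime_conjugate {G : Type*} [Group G] [Finite G] (K : Subgroup G) (x y : G)
    (hx : ∀ k ∈ K, x * k * x⁻¹ ∈ K) (hy : ∀ k ∈ K, y * k * y⁻¹ ∈ K)
    (hcoset : (fun k => k * x) '' (K : Set G) = (fun k => k * y) '' (K : Set G))
    (hox : Nat.Coprime (Nat.card K) (orderOf x))
    (hoy : Nat.Coprime (Nat.card K) (orderOf y)) :
    ∃ k ∈ K, x = k⁻¹ * y * k :=
  coset_coprime_conjugate_general K x y hx hcoset hox hoy
end

section
/- Let G be a finite group, π a set of primes, y ∈ G a π-element, and K ≤ G a π'-subgroup of G normalized by y (i.e., |K| is divisible by no prime in π). Then the K-conjugacy class y^K = {y^k : k ∈ K} equals the set of π-elements of the coset Ky. -/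
/-!
An element `z ∈ Ky` equals `k⁻¹ * y * k` exactly when `k` is a fixed point of the permutation
`k ↦ y * k * z⁻¹` of `K`. If `y ^ p * k = k * z ^ p` on `K` for a prime `p ∤ |K|`, this
permutation has order dividing `p`, so it has a fixed point. In general, if `y ^ n = z ^ n = 1`
with `n` prime to `|K|`, write `n = p * m`; by induction on `n` we may conjugate `y` so that
`y ^ p = z ^ p = u`, and then apply the prime case inside `K ∩ C(u)`.
-/

namespace Subgroup

variable {G : Type*} [Group G] {K : Subgroup G} {y z : G}

theorem pow_mul_mul_inv_pow_mem (hy : ∀ k ∈ K, y * k * y⁻¹ ∈ K) (n : ℕ) :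
    ∀ k ∈ K, y ^ n * k * (y ^ n)⁻¹ ∈ K := by
  induction n with
  | zero => simp
  | succ n ih =>
    intro k hk
    have h : y ^ (n + 1) * k * (y ^ (n + 1))⁻¹ = y * (y ^ n * k * (y ^ n)⁻¹) * y⁻¹ := by group
    rw [h]
    exact hy _ (ih k hk)

theorem pow_mul_inv_pow_mem_s5 (hy : ∀ k ∈ K, y * k * y⁻¹ ∈ K) (hzy : z * y⁻¹ ∈ K) (n : ℕ) :
    z ^ n * (y ^ n)⁻¹ ∈ K := by
  induction n with
  | zero => simp
  | succ n ih =>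
    have h : z ^ (n + 1) * (y ^ (n + 1))⁻¹ = z * y⁻¹ * (y * (z ^ n * (y ^ n)⁻¹) * y⁻¹) := by
      group
    rw [h]
    exact mul_mem hzy (hy _ ih)

theorem conj_mul_mul_inv_conj_mem (hy : ∀ k ∈ K, y * k * y⁻¹ ∈ K) {k : G} (hk : k ∈ K) :
    ∀ a ∈ K, k⁻¹ * y * k * a * (k⁻¹ * y * k)⁻¹ ∈ K := by
  intro a ha
  have h : k⁻¹ * y * k * a * (k⁻¹ * y * k)⁻¹ = k⁻¹ * (y * (k * a * k⁻¹) * y⁻¹) * k := by group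
  rw [h]
  exact mul_mem (mul_mem (inv_mem hk) (hy _ (mul_mem (mul_mem hk ha) (inv_mem hk)))) hk

theorem mul_inv_conj_mem (hy : ∀ k ∈ K, y * k * y⁻¹ ∈ K) (hzy : z * y⁻¹ ∈ K) {k : G}
    (hk : k ∈ K) : z * (k⁻¹ * y * k)⁻¹ ∈ K := by
  have h : z * (k⁻¹ * y * k)⁻¹ = z * y⁻¹ * (y * k⁻¹ * y⁻¹) * k := by group
  rw [h]
  exact mul_mem (mul_mem hzy (hy _ (inv_mem hk))) hk

theorem exists_conj_eq_of_prime_not_dvd {p : ℕ} [Fact p.Prime] (hpK : ¬p ∣ Nat.card K)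
    (hy : ∀ k ∈ K, y * k * y⁻¹ ∈ K) (hzy : z * y⁻¹ ∈ K) (hyz : ∀ k ∈ K, y ^ p * k = k * z ^ p) :
    ∃ k ∈ K, z = k⁻¹ * y * k := by
  have : Finite K := Nat.finite_of_card_ne_zero fun h => hpK (h ▸ dvd_zero p)
  have : Fintype K := Fintype.ofFinite K
  have hmem : ∀ k ∈ K, y * k * z⁻¹ ∈ K := fun k hk => by
    have h : y * k * z⁻¹ = y * k * y⁻¹ * (z * y⁻¹)⁻¹ := by group
    rw [h]
    exact mul_mem (hy k hk) (inv_mem hzy)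
  let f : K → K := fun k => ⟨y * k * z⁻¹, hmem k k.2⟩
  have hf_iterate (n : ℕ) (k : K) : ((f^[n] k : K) : G) = y ^ n * k * (z ^ n)⁻¹ := by
    induction n with
    | zero => simp
    | succ n ih =>
      rw [Function.iterate_succ_apply']
      simp only [f, ih]
      group
  have hf : f.Injective := fun a b hab => by
    simpa [f] using congrArg Subtype.val hab
  let σ : Equiv.Perm K := Equiv.ofBijective f (Finite.injective_iff_bijective.mp hf)
  have hσ : σ ^ p ^ 1 = 1 := by
    ext k
    rw [pow_one, Equiv.Perm.coe_pow]
    simp [σ, hf_iterate, hyz k k.2]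
  obtain ⟨k, hk⟩ := Equiv.Perm.exists_fixed_point_of_prime
    (by rwa [← Nat.card_eq_fintype_card]) hσ
  refine ⟨k, k.2, ?_⟩
  have hfix : y * k * z⁻¹ = k := congrArg Subtype.val hk
  rw [mul_inv_eq_iff_eq_mul] at hfix
  rw [mul_assoc, hfix]
  group

theorem exists_conj_eq_of_pow_prime_eq {p : ℕ} [Fact p.Prime] (hpK : ¬p ∣ Nat.card K)
    (hy : ∀ k ∈ K, y * k * y⁻¹ ∈ K) (hzy : z * y⁻¹ ∈ K) (hyz : y ^ p = z ^ p) :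
    ∃ k ∈ K, z = k⁻¹ * y * k := by
  have hyC : y ∈ centralizer {z ^ p} := by
    rw [mem_centralizer_singleton_iff, ← hyz]
    exact (Commute.self_pow y p).eq
  have hzC : z ∈ centralizer {z ^ p} :=
    mem_centralizer_singleton_iff.mpr (Commute.self_pow z p).eq
  have hpC : ¬p ∣ Nat.card (K ⊓ centralizer {z ^ p} : Subgroup G) :=
    fun h => hpK (h.trans (card_dvd_of_le inf_le_left))
  obtain ⟨c, hc, rfl⟩ := exists_conj_eq_of_prime_not_dvd hpC
    (fun a ha => mem_inf.mpr ⟨hy a (mem_inf.mp ha).1,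
      mul_mem (mul_mem hyC (mem_inf.mp ha).2) (inv_mem hyC)⟩)
    (mem_inf.mpr ⟨hzy, mul_mem hzC (inv_mem hyC)⟩)
    (fun a ha => by
      rw [hyz]
      exact (mem_centralizer_singleton_iff.mp (mem_inf.mp ha).2).symm)
  exact ⟨c, (mem_inf.mp hc).1, rfl⟩

theorem exists_conj_eq_of_coprime {n : ℕ} (hK : (Nat.card K).Coprime n) (hyn : y ^ n = 1)
    (hzn : z ^ n = 1) (hy : ∀ k ∈ K, y * k * y⁻¹ ∈ K) (hzy : z * y⁻¹ ∈ K) :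
    ∃ k ∈ K, z = k⁻¹ * y * k := by
  induction n using Nat.strong_induction_on generalizing y z with
  | _ n ih =>
  obtain hn | hn := Nat.lt_or_ge n 2
  · obtain rfl : z = y := by
      interval_cases n
      · rwa [eq_bot_of_card_eq K (Nat.coprime_zero_right _ |>.mp hK), mem_bot,
          mul_inv_eq_one] at hzy
      · rw [pow_one] at hyn hzn
        rw [hyn, hzn]
    exact ⟨1, one_mem K, by group⟩
  obtain ⟨p, hp, m, rfl⟩ := Nat.exists_prime_and_dvd (show n ≠ 1 by omega)
  have : Fact p.Prime := ⟨hp⟩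
  obtain ⟨k, hk, hkp⟩ := ih m (lt_mul_left (Nat.pos_of_ne_zero (by rintro rfl; omega)) hp.one_lt)
    (hK.coprime_dvd_right (dvd_mul_left m p)) (by rwa [← pow_mul]) (by rwa [← pow_mul])
    (pow_mul_mul_inv_pow_mem hy p) (pow_mul_inv_pow_mem_s5 hy hzy p)
  have hpK : ¬p ∣ Nat.card K :=
    hp.coprime_iff_not_dvd.mp (hK.coprime_dvd_right (dvd_mul_right p m)).symm
  have hconj_pow : (k⁻¹ * y * k) ^ p = z ^ p := by
    simpa [hkp] using conj_pow (a := k⁻¹) (b := y) (i := p)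
  obtain ⟨c, hc, rfl⟩ := exists_conj_eq_of_pow_prime_eq hpK (conj_mul_mul_inv_conj_mem hy hk)
    (mul_inv_conj_mem hy hzy hk) hconj_pow
  exact ⟨k * c, mul_mem hk hc, by group⟩

end Subgroup

theorem conj_class_eq_pi_elements_of_coset_general {G : Type*} [Group G]
    (π : Set ℕ)
    (K : Subgroup G) (hK : ∀ q : ℕ, q.Prime → q ∣ Nat.card K → q ∉ π)
    (y : G) (hy : ∀ q : ℕ, q.Prime → q ∣ orderOf y → q ∈ π)
    (hnorm : ∀ k ∈ K, y * k * y⁻¹ ∈ K) :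
    {z : G | ∃ k ∈ K, z = k⁻¹ * y * k}
      = {z : G | z ∈ (fun k => k * y) '' (K : Set G) ∧
          ∀ q : ℕ, q.Prime → q ∣ orderOf z → q ∈ π} := by
  ext z
  constructor
  · rintro ⟨k, hk, rfl⟩
    refine ⟨⟨k⁻¹ * (y * k * y⁻¹), mul_mem (inv_mem hk) (hnorm k hk), by group⟩, ?_⟩
    have hconj : orderOf (k⁻¹ * y * k) = orderOf y :=
      SemiconjBy.orderOf_eq k (by simp [SemiconjBy, mul_assoc])
    rwa [hconj]
  · rintro ⟨⟨k, hk, rfl⟩, hz⟩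
    have hcop : (Nat.card K).Coprime (orderOf y * orderOf (k * y)) :=
      (Nat.coprime_of_dvd fun q hq hqK hqy => hK q hq hqK (hy q hq hqy)).mul_right
        (Nat.coprime_of_dvd fun q hq hqK hqz => hK q hq hqK (hz q hq hqz))
    exact Subgroup.exists_conj_eq_of_coprime hcop
      (orderOf_dvd_iff_pow_eq_one.mp (dvd_mul_right _ _))
      (orderOf_dvd_iff_pow_eq_one.mp (dvd_mul_left _ _)) hnorm (by simpa using hk)

/-- If `y` is a `π`-element of a finite group `G` normalizing a `π'`-subgroup
`K ≤ G`, then the `K`-conjugacy class of `y` equals the set of `π`-elements of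
the coset `Ky`. -/
theorem conj_class_eq_pi_elements_of_coset {G : Type*} [Group G] [Finite G]
    (π : Set ℕ) (hπ : ∀ q ∈ π, Nat.Prime q)
    (K : Subgroup G) (hK : ∀ q : ℕ, q.Prime → q ∣ Nat.card K → q ∉ π)
    (y : G) (hy : ∀ q : ℕ, q.Prime → q ∣ orderOf y → q ∈ π)
    (hnorm : ∀ k ∈ K, y * k * y⁻¹ ∈ K) :
    {z : G | ∃ k ∈ K, z = k⁻¹ * y * k}
      = {z : G | z ∈ (fun k => k * y) '' (K : Set G) ∧
          ∀ q : ℕ, q.Prime → q ∣ orderOf z → q ∈ π} :=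
  conj_class_eq_pi_elements_of_coset_general π K hK y hy hnorm
end

section
/- Let G be a finite group, π a set of primes, and x a π-element of G not lying in O_π(G), the largest normal π-subgroup of G. Let D = {y ∈ G : ⟨y⟩ is G-conjugate to ⟨x⟩}. Then |D| ≥ p² − 1, where p is the smallest prime dividing o(x). -/
/-!
The conjugates of `⟨x⟩` form a `G`-orbit `X` of cyclic subgroups of order `n = o(x)`, and `D`
is the set of generators of members of `X`, so `|D| = |X| φ(n) ≥ |X| (p - 1)`.
If `x` normalized every member of `X`, then all members of `X` would normalize each other, so
their join would be a normal subgroup of order dividing a power of `n`, hence a normal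
`π`-subgroup containing `x`. So `x` moves some `H ∈ X`; the `⟨x⟩`-orbit of `H` then has size
a divisor of `n` other than `1`, hence at least `p`, and it does not contain `⟨x⟩`, which `x`
fixes. Therefore `|X| ≥ p + 1` and `|D| ≥ (p + 1)(p - 1)`.
-/

open MulAction Pointwise Subgroup

theorem Nat.minFac_sub_one_le_totient {n : ℕ} (hn : n ≠ 0) : n.minFac - 1 ≤ n.totient := by
  rcases eq_or_ne n 1 with rfl | hn1
  · simp
  rw [← Nat.totient_prime (Nat.minFac_prime hn1)]
  exact Nat.le_of_dvd (Nat.totient_pos.2 (Nat.pos_of_ne_zero hn))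
    (Nat.totient_dvd_of_dvd (Nat.minFac_dvd n))

theorem Set.mul_ncard_le_ncard_preimage {α β : Type*} [Finite α] {f : α → β} {t : Set β}
    {k : ℕ} (hk : ∀ b ∈ t, k ≤ (f ⁻¹' {b}).ncard) : k * t.ncard ≤ (f ⁻¹' t).ncard := by
  classical
  have := Fintype.ofFinite α
  rcases t.finite_or_infinite with ht | ht
  · obtain ⟨u, rfl⟩ := ht.exists_finset_coe
    have hmaps : ∀ a ∈ (Finset.univ : Finset α).filter (f · ∈ u), f a ∈ u :=
      fun a ha => (Finset.mem_filter.1 ha).2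
    have key := Finset.mul_card_image_le_card_of_maps_to hmaps k fun b hb => by
      have hfib : ∀ a, f a ∈ u ∧ f a = b ↔ f a = b := fun a => ⟨And.right, fun h => ⟨h ▸ hb, h⟩⟩
      simpa [Set.ncard_eq_toFinset_card', Finset.filter_filter, hfib] using hk b hb
    simpa [Set.ncard_eq_toFinset_card'] using key
  · simp [ht.ncard]

theorem MulAction.minFac_orderOf_le_ncard_orbit_zpowers {M α : Type*} [Group M] [MulAction M α]
    {x : M} (hx : IsOfFinOrder x) {a : α} (ha : x • a ≠ a) :
    (orderOf x).minFac ≤ (orbit (zpowers x) a).ncard := by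
  have hdvd : (orbit (zpowers x) a).ncard ∣ orderOf x := by
    rw [← index_stabilizer, ← Nat.card_zpowers]
    exact index_dvd_card _
  have hne : (orbit (zpowers x) a).ncard ≠ 1 := by
    intro h
    obtain ⟨b, hb⟩ := Set.ncard_eq_one.1 h
    have ha' : a ∈ orbit (zpowers x) a := mem_orbit_self a
    have hxa : x • a ∈ orbit (zpowers x) a := ⟨⟨x, mem_zpowers x⟩, rfl⟩
    rw [hb] at ha' hxa
    exact ha (hxa.trans ha'.symm)
  have hpos := Nat.pos_of_dvd_of_pos hdvd hx.orderOf_pos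
  exact Nat.minFac_le_of_dvd (by omega) hdvd

section

variable {G : Type*} [Group G]

theorem Subgroup.zpowers_pow_eq_of_coprime {y : G} {k : ℕ} (hk : k.Coprime (orderOf y)) :
    zpowers (y ^ k) = zpowers y := by
  obtain ⟨m, hm⟩ := exists_pow_eq_self_of_coprime hk
  refine le_antisymm (zpowers_le.2 (pow_mem (mem_zpowers y) k)) (zpowers_le.2 ?_)
  have := pow_mem (mem_zpowers (y ^ k)) m
  rwa [hm] at this

theorem totient_orderOf_le_ncard_generators [Finite G] (y : G) :
    (orderOf y).totient ≤ {z : G | zpowers z = zpowers y}.ncard := by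
  classical
  have := Fintype.ofFinite G
  rw [Nat.totient_eq_card_coprime, Set.ncard_eq_toFinset_card']
  refine Finset.card_le_card_of_injOn (y ^ ·) (fun k hk => ?_)
    (pow_injOn_Iio_orderOf.mono fun k hk => ?_)
  · simp only [Finset.coe_filter, Finset.mem_range, Set.mem_ofPred_eq] at hk
    simpa using zpowers_pow_eq_of_coprime hk.2.symm
  · simpa using (Finset.mem_filter.1 hk).1

theorem Subgroup.smul_zpowers {α : Type*} [Monoid α] [MulDistribMulAction α G] (a : α) (y : G) :
    a • zpowers y = zpowers (a • y) :=
  MonoidHom.map_zpowers _ _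

theorem ConjAct.orderOf_smul (g : ConjAct G) (y : G) : orderOf (g • y) = orderOf y :=
  MulEquiv.orderOf_eq (MulDistribMulAction.toMulEquiv G g) y

theorem Subgroup.card_sup_dvd_of_le_normalizer {H K : Subgroup G} (hHK : H ≤ normalizer K) :
    Nat.card ↥(H ⊔ K) ∣ Nat.card H * Nat.card K := by
  have := normal_subgroupOf_of_le_normalizer hHK
  have := normal_subgroupOf_sup_of_le_normalizer hHK
  rw [card_eq_card_quotient_mul_card_subgroup (K.subgroupOf (H ⊔ K)),
    ← Nat.card_congr (QuotientGroup.quotientInfEquivProdNormalizerQuotient H K hHK).toEquiv,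
    Nat.card_congr (subgroupOfEquivOfLe le_sup_right).toEquiv]
  exact mul_dvd_mul_right (K.subgroupOf H).index_dvd_card _

theorem Subgroup.card_finset_sup_dvd_prod {s : Finset (Subgroup G)}
    (hs : ∀ H ∈ s, ∀ K ∈ s, H ≤ normalizer K) :
    Nat.card ↥(s.sup id) ∣ ∏ H ∈ s, Nat.card H := by
  classical
  induction s using Finset.induction_on with
  | empty => simp
  | insert K s hK ih =>
    have hsK : s.sup id ≤ normalizer K :=
      Finset.sup_le fun H hH => hs H (Finset.mem_insert_of_mem hH) K (Finset.mem_insert_self K s)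
    rw [Finset.sup_insert, Finset.prod_insert hK, id, sup_comm, mul_comm]
    exact (card_sup_dvd_of_le_normalizer hsK).trans <| mul_dvd_mul_right
      (ih fun H hH L hL => hs H (Finset.mem_insert_of_mem hH) L (Finset.mem_insert_of_mem hL)) _

theorem Subgroup.normal_sSup_orbit_conjAct (H : Subgroup G) :
    (sSup (orbit (ConjAct G) H)).Normal := by
  refine ⟨fun n hn g => ?_⟩
  suffices sSup (orbit (ConjAct G) H) ≤ (sSup (orbit (ConjAct G) H)).comap (MulAut.conj g) from
    this hn
  refine sSup_le fun K hK k hk => ?_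
  rw [mem_comap, MonoidHom.coe_coe, ← ConjAct.toConjAct_smul_eq_mulAut_conj]
  exact le_sSup (mem_orbit_of_mem_orbit _ hK) (smul_mem_pointwise_smul k _ K hk)

end

section Conjugates

variable {G : Type*} [Group G] {x : G}

theorem le_normalizer_of_forall_conjAct_smul_eq
    (h : ∀ K ∈ orbit (ConjAct G) (zpowers x), ConjAct.toConjAct x • K = K) {H K : Subgroup G}
    (hH : H ∈ orbit (ConjAct G) (zpowers x)) (hK : K ∈ orbit (ConjAct G) (zpowers x)) :
    H ≤ normalizer K := by
  obtain ⟨g, rfl⟩ := mem_orbit_iff.1 hH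
  have hconj : ConjAct.toConjAct (g • x) = g * ConjAct.toConjAct x * g⁻¹ := by
    simp [ConjAct.smul_def]
  rw [smul_zpowers, zpowers_le, ← conjAct_pointwise_smul_iff, hconj, mul_smul, mul_smul,
    h _ (mem_orbit_of_mem_orbit g⁻¹ hK), smul_inv_smul]

theorem prime_dvd_orderOf_of_mem_sSup_orbit [Finite G]
    (h : ∀ K ∈ orbit (ConjAct G) (zpowers x), ConjAct.toConjAct x • K = K) {m : G}
    (hm : m ∈ sSup (orbit (ConjAct G) (zpowers x))) {q : ℕ} (hq : q.Prime)
    (hqm : q ∣ orderOf m) : q ∣ orderOf x := by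
  have hX := Set.toFinite (orbit (ConjAct G) (zpowers x))
  have hcard : Nat.card ↥(sSup (orbit (ConjAct G) (zpowers x))) ∣
      ∏ H ∈ hX.toFinset, Nat.card H := by
    have hsup : sSup (orbit (ConjAct G) (zpowers x)) = hX.toFinset.sup id := by
      rw [Finset.sup_id_eq_sSup, hX.coe_toFinset]
    rw [hsup]
    exact card_finset_sup_dvd_prod fun H hH K hK =>
      le_normalizer_of_forall_conjAct_smul_eq h (hX.mem_toFinset.1 hH) (hX.mem_toFinset.1 hK)
  obtain ⟨H, hH, hqH⟩ := (Prime.dvd_finsetProd_iff hq.prime _).1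
    ((hqm.trans (orderOf_dvd_natCard _ hm)).trans hcard)
  obtain ⟨g, rfl⟩ := mem_orbit_iff.1 (hX.mem_toFinset.1 hH)
  rwa [smul_zpowers, Nat.card_zpowers, ConjAct.orderOf_smul] at hqH

theorem minFac_orderOf_add_one_le_ncard_orbit [Finite G] {H : Subgroup G}
    (hH : H ∈ orbit (ConjAct G) (zpowers x)) (hxH : ConjAct.toConjAct x • H ≠ H) :
    (orderOf x).minFac + 1 ≤ (orbit (ConjAct G) (zpowers x)).ncard := by
  set c := ConjAct.toConjAct x
  have hc : orderOf c = orderOf x := MulEquiv.orderOf_eq ConjAct.toConjAct x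
  have hsub : orbit (zpowers c) H ⊆ orbit (ConjAct G) (zpowers x) := by
    rintro _ ⟨g, rfl⟩
    exact mem_orbit_of_mem_orbit (g : ConjAct G) hH
  have hnot : zpowers x ∉ orbit (zpowers c) H := by
    intro hmem
    obtain ⟨⟨g, hg⟩, hgH⟩ := mem_orbit_iff.1 (mem_orbit_symm.1 hmem)
    obtain ⟨k, rfl⟩ := mem_zpowers_iff.1 hg
    have hfix : c • zpowers x = zpowers x :=
      conjAct_pointwise_smul_eq_self (le_normalizer (mem_zpowers x))
    apply hxH
    rw [← hgH, Submonoid.smul_def, ← mul_smul, (Commute.self_zpow c k).eq, mul_smul, hfix]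
  calc (orderOf x).minFac + 1 ≤ (orbit (zpowers c) H).ncard + 1 := by
        rw [← hc]
        gcongr
        exact minFac_orderOf_le_ncard_orbit_zpowers (orderOf_pos_iff.1 (hc ▸ orderOf_pos x)) hxH
    _ = (insert (zpowers x) (orbit (zpowers c) H)).ncard := (Set.ncard_insert_of_notMem hnot).symm
    _ ≤ _ := Set.ncard_le_ncard (Set.insert_subset (mem_orbit_self _) hsub)

theorem setOf_exists_conj_zpowers_eq (x : G) :
    {y : G | ∃ g : G, zpowers (g * y * g⁻¹) = zpowers x} =
      zpowers ⁻¹' orbit (ConjAct G) (zpowers x) := by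
  ext y
  rw [Set.mem_preimage, mem_orbit_symm, mem_orbit_iff, ConjAct.toConjAct.surjective.exists]
  simp [smul_zpowers, ConjAct.toConjAct_smul]

end Conjugates

theorem card_generating_conjugates_ge_general {G : Type*} [Group G] [Finite G]
    (π : Set ℕ)
    (x : G) (hx : ∀ q : ℕ, q.Prime → q ∣ orderOf x → q ∈ π)
    (hxO : ∀ N : Subgroup G, N.Normal →
      (∀ n ∈ N, ∀ q : ℕ, q.Prime → q ∣ orderOf n → q ∈ π) → x ∉ N)
    {p : ℕ}
    (hpmin : ∀ q : ℕ, q.Prime → q ∣ orderOf x → p ≤ q) :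
    p ^ 2 - 1 ≤
      Nat.card {y : G | ∃ g : G, Subgroup.zpowers (g * y * g⁻¹) = Subgroup.zpowers x} := by
  set X := orbit (ConjAct G) (zpowers x)
  obtain ⟨H, hH, hxH⟩ : ∃ H ∈ X, ConjAct.toConjAct x • H ≠ H := by
    by_contra! h
    exact hxO _ (normal_sSup_orbit_conjAct _)
      (fun m hm q hq hqm => hx q hq (prime_dvd_orderOf_of_mem_sSup_orbit h hm hq hqm))
      ((le_sSup (mem_orbit_self _) : zpowers x ≤ sSup X) (mem_zpowers x))
  have hfiber : ∀ K ∈ X, (orderOf x).minFac - 1 ≤ (zpowers ⁻¹' {K}).ncard := by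
    intro K hK
    obtain ⟨g, rfl⟩ := mem_orbit_iff.1 hK
    rw [smul_zpowers, ← ConjAct.orderOf_smul g x]
    exact (Nat.minFac_sub_one_le_totient (orderOf_pos _).ne').trans
      (totient_orderOf_le_ncard_generators _)
  have hp : p ≤ (orderOf x).minFac := by
    refine (Nat.le_minFac.2 hpmin).resolve_left fun h1 => hxH ?_
    rw [orderOf_eq_one_iff.1 h1, map_one, one_smul]
  calc p ^ 2 - 1 = (p + 1) * (p - 1) := Nat.sq_sub_sq p 1
    _ ≤ ((orderOf x).minFac + 1) * ((orderOf x).minFac - 1) := by gcongr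
    _ ≤ X.ncard * ((orderOf x).minFac - 1) := by
        gcongr; exact minFac_orderOf_add_one_le_ncard_orbit hH hxH
    _ ≤ (zpowers ⁻¹' X).ncard := by rw [mul_comm]; exact Set.mul_ncard_le_ncard_preimage hfiber
    _ = _ := by rw [setOf_exists_conj_zpowers_eq, Nat.card_coe_set_eq]

/-- If `x` is a `π`-element of a finite group `G` not lying in `O_π(G)` (i.e. in
no normal `π`-subgroup), and `D` is the set of `y ∈ G` such that `⟨y⟩` is
`G`-conjugate to `⟨x⟩`, then `|D| ≥ p² - 1`, where `p` is the smallest prime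
dividing `o(x)`. -/
theorem card_generating_conjugates_ge {G : Type*} [Group G] [Finite G]
    (π : Set ℕ) (hπ : ∀ q ∈ π, Nat.Prime q)
    (x : G) (hx : ∀ q : ℕ, q.Prime → q ∣ orderOf x → q ∈ π)
    (hxO : ∀ N : Subgroup G, N.Normal →
      (∀ n ∈ N, ∀ q : ℕ, q.Prime → q ∣ orderOf n → q ∈ π) → x ∉ N)
    {p : ℕ} (hp : p.Prime) (hpx : p ∣ orderOf x)
    (hpmin : ∀ q : ℕ, q.Prime → q ∣ orderOf x → p ≤ q) :
    p ^ 2 - 1 ≤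
      Nat.card {y : G | ∃ g : G, Subgroup.zpowers (g * y * g⁻¹) = Subgroup.zpowers x} :=
  card_generating_conjugates_ge_general π x hx hxO hpmin
end

section
/- Let G be a finite group and q a prime such that G has no normal Sylow q-subgroup. Then the number of q-elements of G (elements of q-power order) is at least q². -/
/-!
Let `q ^ k` be the order of the Sylow `q`-subgroups. If `k ≥ 2`, one Sylow subgroup already
contains `q ^ 2` elements of `q`-power order. If `k = 0`, the Sylow subgroup is trivial, hence
normal. If `k = 1`, distinct Sylow subgroups meet trivially, and their number is `≡ 1 [MOD q]`
and not `1` (otherwise the Sylow subgroup would be normal), so at least `q + 1`; their union then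
has at least `(q + 1) * (q - 1) + 1 = q ^ 2` elements.
-/

open Subgroup

section

variable {G : Type*} [Group G] {p : ℕ}

theorem IsPGroup.coe_subset_setOf_orderOf_eq_pow [Fact p.Prime] {H : Subgroup G}
    (hH : IsPGroup p H) : (H : Set G) ⊆ {g : G | ∃ k : ℕ, orderOf g = p ^ k} := fun g hg ↦ by
  obtain ⟨k, hk⟩ := IsPGroup.iff_orderOf.mp hH ⟨g, hg⟩
  exact ⟨k, by rwa [Subgroup.orderOf_mk] at hk⟩

theorem Subgroup.inf_eq_bot_of_card_eq_prime (hp : p.Prime) {H K : Subgroup G}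
    (hH : Nat.card H = p) (hK : Nat.card K = p) (hne : H ≠ K) : H ⊓ K = ⊥ := by
  have : Finite H := Nat.finite_of_card_ne_zero (hH ▸ hp.ne_zero)
  have : Finite K := Nat.finite_of_card_ne_zero (hK ▸ hp.ne_zero)
  rcases (Nat.dvd_prime hp).mp (hH ▸ card_dvd_of_le (inf_le_left : H ⊓ K ≤ H)) with h1 | hcard
  · exact card_eq_one.mp h1
  · have hHK : H ⊓ K = H := eq_of_le_of_card_ge inf_le_left (by rw [hcard, hH])
    exact absurd (eq_of_le_of_card_ge (hHK ▸ inf_le_right) (by rw [hH, hK])) hne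

theorem Subgroup.card_iUnion_of_pairwise_inf_eq_bot [Finite G] {ι : Type*} [Fintype ι]
    [Nonempty ι] (H : ι → Subgroup G) (h : Pairwise fun i j ↦ H i ⊓ H j = ⊥) :
    Nat.card (⋃ i, (H i : Set G)) = ∑ i, (Nat.card (H i) - 1) + 1 := by
  classical
  have : Fintype G := Fintype.ofFinite G
  have hunion : (⋃ i, (H i : Set G)).toFinset =
      insert 1 (Finset.univ.biUnion fun i ↦ ((H i : Set G).toFinset.erase 1)) := by
    ext g
    by_cases hg : g = 1 <;> simp [hg]
  have hdisj : ((Finset.univ : Finset ι) : Set ι).PairwiseDisjoint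
      fun i ↦ ((H i : Set G).toFinset.erase 1) := by
    intro i _ j _ hij
    refine Finset.disjoint_left.mpr fun g hgi hgj ↦ ?_
    simp only [Finset.mem_erase, Set.mem_toFinset, SetLike.mem_coe] at hgi hgj
    exact hgi.1 ((mem_bot.mp ((h hij) ▸ mem_inf.mpr ⟨hgi.2, hgj.2⟩)))
  rw [Nat.card_eq_card_toFinset, hunion, Finset.card_insert_of_notMem (by simp),
    Finset.card_biUnion hdisj]
  congr 1
  refine Finset.sum_congr rfl fun i _ ↦ ?_
  rw [Finset.card_erase_of_mem (by simp), Set.toFinset_card,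
    ← Nat.card_eq_fintype_card]
  rfl

theorem Sylow.prime_add_one_le_card_of_not_normal [Fact p.Prime] [Finite (Sylow p G)]
    (P : Sylow p G) (h : ¬ (P : Subgroup G).Normal) : p + 1 ≤ Nat.card (Sylow p G) := by
  have hpos : 0 < Nat.card (Sylow p G) := Nat.card_pos
  have hne : Nat.card (Sylow p G) ≠ 1 := fun h1 ↦
    have : Subsingleton (Sylow p G) := (Nat.card_eq_one_iff_unique.mp h1).1
    h P.normal_of_subsingleton
  have hdvd : p ∣ Nat.card (Sylow p G) - 1 :=
    (Nat.modEq_iff_dvd' hpos).mp (card_sylow_modEq_one p G).symm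
  have := Nat.le_of_dvd (by omega) hdvd
  omega

theorem Sylow.card_mul_sub_one_add_one_le_card_setOf_orderOf_eq_pow [Finite G] [Fact p.Prime]
    (hcard : ∀ P : Sylow p G, Nat.card P = p) :
    Nat.card (Sylow p G) * (p - 1) + 1 ≤ Nat.card {g : G | ∃ k : ℕ, orderOf g = p ^ k} := by
  have := Fintype.ofFinite (Sylow p G)
  have hdisj : Pairwise fun P Q : Sylow p G ↦ (P : Subgroup G) ⊓ Q = ⊥ := fun P Q hPQ ↦
    inf_eq_bot_of_card_eq_prime Fact.out (hcard P) (hcard Q) (hPQ ∘ Sylow.ext)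
  calc Nat.card (Sylow p G) * (p - 1) + 1
      = Nat.card (⋃ P : Sylow p G, ((P : Subgroup G) : Set G)) := by
        rw [card_iUnion_of_pairwise_inf_eq_bot _ hdisj]
        simp [hcard, Nat.card_eq_fintype_card]
    _ ≤ _ := Nat.card_mono (Set.toFinite _)
        (Set.iUnion_subset fun P ↦ P.isPGroup'.coe_subset_setOf_orderOf_eq_pow)

end

theorem card_q_elements_ge_of_no_normal_sylow_general {G : Type*} [Group G] [Finite G]
    {q : ℕ} [Fact q.Prime]
    (h : ∀ Q : Sylow q G, ¬ (Q : Subgroup G).Normal) :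
    q ^ 2 ≤ Nat.card {g : G | ∃ k : ℕ, orderOf g = q ^ k} := by
  obtain ⟨P⟩ : Nonempty (Sylow q G) := inferInstance
  set k := (Nat.card G).factorization q
  have hcard : ∀ Q : Sylow q G, Nat.card Q = q ^ k := Sylow.card_eq_multiplicity
  obtain hk | hk | hk : k = 0 ∨ k = 1 ∨ 2 ≤ k := by omega
  · refine absurd ?_ (h P)
    rw [card_eq_one.mp (show Nat.card (P : Subgroup G) = 1 by rw [hcard, hk, pow_zero])]
    infer_instance
  · calc q ^ 2 ≤ (q + 1) * (q - 1) + 1 := by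
          rcases q with _ | r
          · simp
          · rw [Nat.add_sub_cancel]; nlinarith
      _ ≤ Nat.card (Sylow q G) * (q - 1) + 1 := by
          gcongr; exact P.prime_add_one_le_card_of_not_normal (h P)
      _ ≤ _ := Sylow.card_mul_sub_one_add_one_le_card_setOf_orderOf_eq_pow
          fun Q ↦ by rw [hcard, hk, pow_one]
  · calc q ^ 2 ≤ Nat.card P := hcard P ▸ Nat.pow_le_pow_right (Fact.out : q.Prime).pos hk
      _ ≤ _ := Nat.card_mono (Set.toFinite _) P.isPGroup'.coe_subset_setOf_orderOf_eq_pow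

/-- If a finite group `G` has no normal Sylow `q`-subgroup (for `q` a prime
dividing `|G|`), then the number of `q`-elements of `G` is at least `q²`. -/
theorem card_q_elements_ge_of_no_normal_sylow {G : Type*} [Group G] [Finite G]
    {q : ℕ} [Fact q.Prime] (hq : q ∣ Nat.card G)
    (h : ∀ Q : Sylow q G, ¬ (Q : Subgroup G).Normal) :
    q ^ 2 ≤ Nat.card {g : G | ∃ k : ℕ, orderOf g = q ^ k} :=
  card_q_elements_ge_of_no_normal_sylow_general h
end
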